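/- arXiv:2208.01784 — 2 statements merged into one kernel-verified Lean document; each statement's English description precedes it below -/
import Mathlib

section
/- If α(F,x) < 0.03 and ‖x − y‖ < 1/(20 γ(F,x)), then x and y are both approximate solutions for F with the same associated solution x⋆, and ‖x − x⋆‖ ≤ 1/(20 γ(F,x)). -/
/-!
Normalising by `F'(x)⁻¹`, i.e. passing to `G = F'(x)⁻¹ ∘ F`, changes neither the zeros nor the
Newton iterates, and gives `G'(x) = 1`, `‖G x‖ = β` and `‖G⁽ᵏ⁾(x) / k!‖ ≤ γ ^ (k - 1)` for
`k ≥ 2`. Differentiating the Taylor series of `G` at `x` termwise shows that `G'` is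
`2γ / (1 - γr)³`-Lipschitz on the ball of radius `r < 1/γ` around `x`. Hence `v ↦ v - G v` is a
contraction of the ball of radius `1/(25γ)`, whose fixed point `x⋆` is a zero of `G` with
`‖x - x⋆‖ ≤ 1/(30γ)`. On the ball of radius `1/(12γ)` around `x⋆`, which contains `x` and `y`,
`G'` stays invertible with `‖G'⁻¹‖ ≤ 20/13`, and the Taylor remainder estimate gives
`‖N z - x⋆‖ ≤ (60γ/13) ‖z - x⋆‖²`. Since `(60γ/13) · 1/(12γ) ≤ 1/2`, the error is squared and
halved at every step.
-/

open Classical in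
/-- The Newton operator. -/
noncomputable def newtonOp {n : ℕ} (F : EuclideanSpace ℂ (Fin n) → EuclideanSpace ℂ (Fin n))
    (y : EuclideanSpace ℂ (Fin n)) : EuclideanSpace ℂ (Fin n) :=
  if IsUnit (fderiv ℂ F y) then y - (Ring.inverse (fderiv ℂ F y)) (F y) else y

/-- Smale's `β(F,x) = ‖F'(x)⁻¹ F(x)‖`. -/
noncomputable def smaleBeta {n : ℕ} (F : EuclideanSpace ℂ (Fin n) → EuclideanSpace ℂ (Fin n))
    (x : EuclideanSpace ℂ (Fin n)) : ℝ :=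
  ‖(Ring.inverse (fderiv ℂ F x)) (F x)‖

/-- Smale's `γ(F,x) = sup_{k ≥ 2} ‖F'(x)⁻¹ F^{(k)}(x) / k!‖^{1/(k-1)}`. -/
noncomputable def smaleGamma {n : ℕ} (F : EuclideanSpace ℂ (Fin n) → EuclideanSpace ℂ (Fin n))
    (x : EuclideanSpace ℂ (Fin n)) : ℝ :=
  ⨆ k : {k : ℕ // 2 ≤ k},
    (‖(Ring.inverse (fderiv ℂ F x)).compContinuousMultilinearMap
        (iteratedFDeriv ℂ (k : ℕ) F x)‖ / (Nat.factorial k)) ^ ((1 : ℝ) / ((k : ℕ) - 1))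

/-- Smale's `α(F,x) = β(F,x)·γ(F,x)`. -/
noncomputable def smaleAlpha {n : ℕ} (F : EuclideanSpace ℂ (Fin n) → EuclideanSpace ℂ (Fin n))
    (x : EuclideanSpace ℂ (Fin n)) : ℝ :=
  smaleBeta F x * smaleGamma F x

open Nat Metric Set
open scoped ContDiff ENNReal NNReal

section Taylor

variable {E F : Type*} [NormedAddCommGroup E] [NormedSpace ℂ E]
  [NormedAddCommGroup F] [NormedSpace ℂ F]

noncomputable def taylorSeriesAt (f : E → F) (x : E) : FormalMultilinearSeries ℂ E F :=
  fun k => (k ! : ℂ)⁻¹ • iteratedFDeriv ℂ k f x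

theorem norm_taylorSeriesAt (f : E → F) (x : E) (k : ℕ) :
    ‖taylorSeriesAt f x k‖ = ‖iteratedFDeriv ℂ k f x‖ / k ! := by
  rw [taylorSeriesAt, norm_smul, norm_inv, Complex.norm_natCast, inv_mul_eq_div]

variable [CompleteSpace F] {f : E → F}

/-- The restriction of `f` to the complex line `z ↦ x + z • w` is entire, so its Taylor series at
`0` converges at `1`. -/
theorem hasSum_taylorSeriesAt (hf : ContDiff ℂ ω f) (x w : E) :
    HasSum (fun k => taylorSeriesAt f x k (fun _ => w)) (f (x + w)) := by
  set ℓ := ContinuousLinearMap.toSpanSingleton ℂ w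
  have hshift : ContDiff ℂ ω (fun v => f (x + v)) := hf.comp (contDiff_const.add contDiff_id)
  have hline : Differentiable ℂ ((fun v => f (x + v)) ∘ ℓ) :=
    (hshift.comp ℓ.contDiff).differentiable (by simp)
  have := Complex.hasSum_taylorSeries_of_entire hline 0 1
  simp only [sub_zero, one_pow, one_smul, Function.comp_apply] at this
  convert this using 2 with k
  · rw [iteratedDeriv_eq_iteratedFDeriv, ℓ.iteratedFDeriv_comp_right hshift _ le_top,
      iteratedFDeriv_comp_add_left]
    simp [taylorSeriesAt, ℓ]
  · simp [ℓ]

theorem hasFPowerSeriesOnBall_taylorSeriesAt (hf : ContDiff ℂ ω f) (x : E) {r : ℝ≥0∞}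
    (hr : r ≤ (taylorSeriesAt f x).radius) (hr₀ : 0 < r) :
    HasFPowerSeriesOnBall f (taylorSeriesAt f x) x r :=
  ⟨hr, hr₀, fun _ => hasSum_taylorSeriesAt hf x _⟩

end Taylor

namespace FormalMultilinearSeries

variable {𝕜 E F : Type*} [NontriviallyNormedField 𝕜] [NormedAddCommGroup E] [NormedSpace 𝕜 E]
  [NormedAddCommGroup F] [NormedSpace 𝕜 F] (p : FormalMultilinearSeries 𝕜 E F)

theorem norm_derivSeries_le (m : ℕ) : ‖p.derivSeries m‖ ≤ (m + 1) * ‖p (m + 1)‖ := by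
  have hcard : Fintype.card {s : Finset (Fin (1 + m)) // s.card = m} = m + 1 := by
    rw [Fintype.card_finset_len, Fintype.card_fin, add_comm, Nat.choose_succ_self_right]
  have hchange : ‖p.changeOriginSeries 1 m‖ ≤ (m + 1) * ‖p (1 + m)‖ := by
    have := NNReal.coe_le_coe.2 (p.nnnorm_changeOriginSeries_le_tsum 1 m)
    simpa [tsum_fintype, hcard] using this
  refine (ContinuousLinearMap.norm_compContinuousMultilinearMap_le _ _).trans ?_
  refine (mul_le_of_le_one_left (norm_nonneg _) ?_).trans (by rwa [add_comm 1 m] at hchange)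
  exact ContinuousLinearMap.opNorm_le_bound _ zero_le_one (by simp)

theorem ofReal_inv_le_radius_of_norm_le_pow {c : ℝ} (hc : 0 < c)
    (hp : ∀ k, 2 ≤ k → ‖p k‖ ≤ c ^ (k - 1)) :
    ENNReal.ofReal c⁻¹ ≤ p.radius := by
  refine p.le_radius_of_eventually_le (r := c⁻¹.toNNReal) c⁻¹ ?_
  filter_upwards [Filter.eventually_ge_atTop 2] with k hk
  rw [Real.coe_toNNReal _ (by positivity)]
  calc ‖p k‖ * c⁻¹ ^ k ≤ c ^ (k - 1) * c⁻¹ ^ k := by gcongr; exact hp k hk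
    _ = c⁻¹ := by
      rw [← Nat.sub_add_cancel (by omega : 1 ≤ k), pow_succ, inv_pow, Nat.add_sub_cancel]
      field_simp

end FormalMultilinearSeries

theorem ContinuousMultilinearMap.norm_image_const_sub_le {𝕜 E F : Type*}
    [NontriviallyNormedField 𝕜] [NormedAddCommGroup E] [NormedSpace 𝕜 E] [NormedAddCommGroup F]
    [NormedSpace 𝕜 F] {m : ℕ} (f : ContinuousMultilinearMap 𝕜 (fun _ : Fin (m + 1) => E) F)
    (v w : E) :
    ‖f (fun _ => v) - f (fun _ => w)‖ ≤ ‖f‖ * (m + 1) * max ‖v‖ ‖w‖ ^ m * ‖v - w‖ := by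
  have := f.norm_image_sub_le (fun _ => v) (fun _ => w)
  have hdiff : (fun _ : Fin (m + 1) => v) - (fun _ => w) = fun _ => v - w := rfl
  rwa [hdiff, pi_norm_const, pi_norm_const, pi_norm_const, Fintype.card_fin,
    Nat.add_sub_cancel, Nat.cast_succ] at this

namespace HasFPowerSeriesOnBall

variable {𝕜 E F : Type*} [NontriviallyNormedField 𝕜] [NormedAddCommGroup E] [NormedSpace 𝕜 E]
  [NormedAddCommGroup F] [NormedSpace 𝕜 F] [CompleteSpace F]
  {f : E → F} {p : FormalMultilinearSeries 𝕜 E F} {x : E} {c r : ℝ}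

theorem norm_fderiv_sub_fderiv_le (hf : HasFPowerSeriesOnBall f p x (ENNReal.ofReal c⁻¹))
    (hp : ∀ k, 2 ≤ k → ‖p k‖ ≤ c ^ (k - 1)) (hcr : c * r < 1) {z₁ z₂ : E}
    (hz₁ : z₁ ∈ closedBall x r) (hz₂ : z₂ ∈ closedBall x r) :
    ‖fderiv 𝕜 f z₁ - fderiv 𝕜 f z₂‖ ≤ 2 * c / (1 - c * r) ^ 3 * ‖z₁ - z₂‖ := by
  have hc : 0 < c := inv_pos.1 (ENNReal.ofReal_pos.1 hf.r_pos)
  have hr : 0 ≤ r := dist_nonneg.trans hz₁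
  have hw : ∀ z ∈ closedBall x r, ‖z - x‖ ≤ r := fun z hz => by rwa [← dist_eq_norm]
  have hrc : r < c⁻¹ := by rwa [← one_div, lt_div_iff₀ hc, mul_comm]
  have hmem : ∀ z ∈ closedBall x r, z - x ∈ eball (0 : E) (ENNReal.ofReal c⁻¹) := fun z hz => by
    rw [mem_eball, edist_zero_right, ← ofReal_norm, ENNReal.ofReal_lt_ofReal_iff (by positivity)]
    exact (hw z hz).trans_lt hrc
  set Q := p.derivSeries
  set a : ℕ → E →L[𝕜] F := fun m => Q m (fun _ => z₁ - x) - Q m (fun _ => z₂ - x)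
  have hsum : HasSum a (fderiv 𝕜 f z₁ - fderiv 𝕜 f z₂) := by
    simpa only [add_sub_cancel] using
      (hf.fderiv.hasSum (hmem z₁ hz₁)).sub (hf.fderiv.hasSum (hmem z₂ hz₂))
  have ha₀ : a 0 = 0 := sub_eq_zero.2 (congrArg _ (Subsingleton.elim _ _))
  have hshift : HasSum (fun n => a (n + 1)) (fderiv 𝕜 f z₁ - fderiv 𝕜 f z₂) := by
    simpa [ha₀] using (hasSum_nat_add_iff' 1).2 hsum
  -- `(n + 2) (n + 1) = 2 C(n + 2, 2)` and `∑ C(n + 2, 2) uⁿ = (1 - u)⁻³`.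
  have hterm : ∀ n : ℕ, ‖a (n + 1)‖ ≤
      2 * c * ‖z₁ - z₂‖ * (((n + 2).choose 2 : ℝ) * (c * r) ^ n) := by
    intro n
    have hQ : ‖Q (n + 1)‖ ≤ (n + 2) * c ^ (n + 1) := by
      refine (p.norm_derivSeries_le (n + 1)).trans ?_
      push_cast
      rw [add_assoc, one_add_one_eq_two]
      gcongr
      exact hp (n + 2) (by omega)
    have hmax : max ‖z₁ - x‖ ‖z₂ - x‖ ≤ r := max_le (hw z₁ hz₁) (hw z₂ hz₂)
    calc ‖a (n + 1)‖
        ≤ ‖Q (n + 1)‖ * (n + 1) * max ‖z₁ - x‖ ‖z₂ - x‖ ^ n * ‖z₁ - z₂‖ := by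
          simpa using (Q (n + 1)).norm_image_const_sub_le (z₁ - x) (z₂ - x)
      _ ≤ (n + 2) * c ^ (n + 1) * (n + 1) * r ^ n * ‖z₁ - z₂‖ := by gcongr
      _ = _ := by rw [Nat.cast_choose_two]; push_cast; ring
  have hu : ‖c * r‖ < 1 := by rwa [Real.norm_of_nonneg (by positivity)]
  have hbound := hshift.norm_le_of_bounded
    ((hasSum_choose_mul_geometric_of_norm_lt_one 2 hu).mul_left (2 * c * ‖z₁ - z₂‖)) hterm
  exact hbound.trans_eq (by ring)

end HasFPowerSeriesOnBall

theorem exists_isFixedPt_of_lipschitzOnWith_closedBall {X : Type*} [MetricSpace X]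
    [CompleteSpace X] {T : X → X} {x : X} {ρ : ℝ} {K : ℝ≥0} (hK : K < 1)
    (hT : LipschitzOnWith K T (closedBall x ρ)) (hx : dist x (T x) ≤ (1 - K) * ρ) :
    ∃ y, Function.IsFixedPt T y ∧ dist x y ≤ dist x (T x) / (1 - K) := by
  have hρ : 0 ≤ ρ := nonneg_of_mul_nonneg_right (dist_nonneg.trans hx) (by simpa using hK)
  have hxs : x ∈ closedBall x ρ := mem_closedBall_self hρ
  have hmaps : MapsTo T (closedBall x ρ) (closedBall x ρ) := by
    intro z hz
    rw [mem_closedBall] at hz ⊢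
    calc dist (T z) x ≤ dist (T z) (T x) + dist (T x) x := dist_triangle _ _ _
      _ ≤ K * ρ + (1 - K) * ρ := by
          rw [dist_comm (T x)]
          gcongr
          exact (hT.dist_le_mul z hz x hxs).trans (by gcongr)
      _ = ρ := by ring
  have : Nonempty (closedBall x ρ) := ⟨⟨x, hxs⟩⟩
  have : CompleteSpace (closedBall x ρ) := isClosed_closedBall.completeSpace_coe
  have hcon : ContractingWith K (hmaps.restrict T _ _) :=
    ⟨hK, (hmaps.lipschitzOnWith_iff_restrict).1 hT⟩
  refine ⟨hcon.fixedPoint, congrArg Subtype.val hcon.fixedPoint_isFixedPt, ?_⟩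
  simpa [Subtype.dist_eq] using hcon.dist_fixedPoint_le ⟨x, hxs⟩

section Newton

variable {𝕜 E : Type*} [NontriviallyNormedField 𝕜] [NormedAddCommGroup E] [NormedSpace 𝕜 E]

theorem ContinuousLinearMap.isUnit_of_norm_sub_one_lt_one [CompleteSpace E] {A : E →L[𝕜] E}
    (h : ‖A - 1‖ < 1) : IsUnit A := by
  simpa using isUnit_one_sub_of_norm_lt_one (x := 1 - A) (by rwa [norm_sub_rev])

theorem ContinuousLinearMap.norm_inverse_le_of_norm_sub_one_lt_one [CompleteSpace E]
    {A : E →L[𝕜] E} (h : ‖A - 1‖ < 1) : ‖Ring.inverse A‖ ≤ (1 - ‖A - 1‖)⁻¹ := by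
  have h' : ‖1 - A‖ < 1 := by rwa [norm_sub_rev]
  have hgeom := tsum_geometric_le_of_norm_lt_one _ h'
  rw [geom_series_eq_inverse _ h', sub_sub_cancel, norm_sub_rev] at hgeom
  have h1 : ‖(1 : E →L[𝕜] E)‖ ≤ 1 := ContinuousLinearMap.norm_id_le
  linarith

theorem norm_sub_inverse_apply_sub_le {G : E → E} {A : E →L[𝕜] E} (hA : IsUnit A) {z xs : E}
    (hxs : G xs = 0) :
    ‖z - Ring.inverse A (G z) - xs‖ ≤ ‖Ring.inverse A‖ * ‖G xs - G z - A (xs - z)‖ := by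
  have hAA : Ring.inverse A (A (xs - z)) = xs - z := by
    simpa using congrArg (· (xs - z)) (Ring.inverse_mul_cancel _ hA)
  have : z - Ring.inverse A (G z) - xs = Ring.inverse A (G xs - G z - A (xs - z)) := by
    rw [map_sub, map_sub, hAA, hxs, map_zero]
    abel
  rw [this]
  exact (Ring.inverse A).le_opNorm _

variable [IsRCLikeNormedField 𝕜] [NormedSpace ℝ E]

theorem Convex.norm_image_sub_sub_fderiv_le {F : Type*} [NormedAddCommGroup F] [NormedSpace 𝕜 F]
    {f : E → F} {s : Set E} {L : ℝ} (hs : Convex ℝ s) (hf : ∀ z ∈ s, DifferentiableAt 𝕜 f z)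
    (hL : ∀ z ∈ s, ∀ z' ∈ s, ‖fderiv 𝕜 f z - fderiv 𝕜 f z'‖ ≤ L * ‖z - z'‖) {a b : E}
    (ha : a ∈ s) (hb : b ∈ s) :
    ‖f b - f a - fderiv 𝕜 f a (b - a)‖ ≤ L * ‖b - a‖ ^ 2 := by
  rcases eq_or_ne b a with rfl | hba
  · simp
  have hL₀ : 0 ≤ L := nonneg_of_mul_nonneg_left ((norm_nonneg _).trans (hL b hb a ha))
    (norm_pos_iff.2 (sub_ne_zero.2 hba))
  set t := s ∩ closedBall a ‖b - a‖
  have hbound : ∀ z ∈ t, ‖fderiv 𝕜 f z - fderiv 𝕜 f a‖ ≤ L * ‖b - a‖ := fun z hz =>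
    (hL z hz.1 a ha).trans (by gcongr; exact mem_closedBall_iff_norm.1 hz.2)
  have := (hs.inter (convex_closedBall a _)).norm_image_sub_le_of_norm_fderiv_le'
    (fun z hz => hf z hz.1) hbound ⟨ha, mem_closedBall_self (norm_nonneg _)⟩
    ⟨hb, mem_closedBall_iff_norm.2 le_rfl⟩
  rwa [mul_assoc, ← sq] at this

theorem exists_eq_zero_of_norm_fderiv_sub_one_le [CompleteSpace E] {G : E → E} {x : E}
    {ρ K : ℝ} (hG : ∀ z ∈ closedBall x ρ, DifferentiableAt 𝕜 G z)
    (hK : ∀ z ∈ closedBall x ρ, ‖fderiv 𝕜 G z - 1‖ ≤ K) (hK₁ : K < 1)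
    (hGx : ‖G x‖ ≤ (1 - K) * ρ) :
    ∃ xs, G xs = 0 ∧ ‖x - xs‖ ≤ ‖G x‖ / (1 - K) := by
  have hρ : 0 ≤ ρ := nonneg_of_mul_nonneg_right ((norm_nonneg _).trans hGx) (by linarith)
  have hK₀ : 0 ≤ K := (norm_nonneg _).trans (hK x (mem_closedBall_self hρ))
  set T : E → E := fun v => v - G v
  have hT : LipschitzOnWith K.toNNReal T (closedBall x ρ) := by
    refine LipschitzOnWith.of_dist_le_mul fun z hz w hw => ?_
    rw [Real.coe_toNNReal _ hK₀, dist_eq_norm, dist_eq_norm]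
    have := (convex_closedBall x ρ).norm_image_sub_le_of_norm_fderiv_le' hG hK hw hz
    rwa [one_apply_eq_self, norm_sub_rev, sub_sub_sub_comm] at this
  have hTx : dist x (T x) = ‖G x‖ := by simp [T]
  obtain ⟨xs, hfix, hdist⟩ := exists_isFixedPt_of_lipschitzOnWith_closedBall
    (Real.toNNReal_lt_one.2 hK₁) hT (by rwa [hTx, Real.coe_toNNReal _ hK₀])
  refine ⟨xs, sub_eq_self.1 hfix, ?_⟩
  rwa [hTx, Real.coe_toNNReal _ hK₀, dist_eq_norm] at hdist

end Newton

theorem norm_iterate_sub_le_of_norm_sub_le_sq {X : Type*} [SeminormedAddCommGroup X]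
    {N : X → X} {xs : X} {K R : ℝ} (hK : 0 ≤ K) (hKR : K * R ≤ 1 / 2)
    (hN : ∀ z, ‖z - xs‖ ≤ R → ‖N z - xs‖ ≤ K * ‖z - xs‖ ^ 2) {z : X} (hz : ‖z - xs‖ ≤ R)
    (k : ℕ) : ‖N^[k] z - xs‖ ≤ (1 / 2 : ℝ) ^ (2 ^ k - 1) * ‖z - xs‖ := by
  induction k with
  | zero => simp
  | succ k ih =>
    set h : ℝ := (1 / 2 : ℝ) ^ (2 ^ k - 1)
    have hh : 0 ≤ h := by positivity
    have hh₁ : h ≤ 1 := pow_le_one₀ (by norm_num) (by norm_num)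
    have hpow : (1 / 2 : ℝ) ^ (2 ^ (k + 1) - 1) = h * h * (1 / 2) := by
      rw [← pow_add, ← pow_succ]
      congr 1
      have := Nat.one_le_two_pow (n := k)
      rw [pow_succ]
      omega
    have hKz : K * ‖z - xs‖ ≤ 1 / 2 := (mul_le_mul_of_nonneg_left hz hK).trans hKR
    rw [Function.iterate_succ_apply']
    calc ‖N (N^[k] z) - xs‖ ≤ K * ‖N^[k] z - xs‖ ^ 2 :=
          hN _ (ih.trans ((mul_le_of_le_one_left (norm_nonneg _) hh₁).trans hz))
      _ ≤ K * (h * ‖z - xs‖) ^ 2 := by gcongr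
      _ = h * h * (K * ‖z - xs‖) * ‖z - xs‖ := by ring
      _ ≤ h * h * (1 / 2) * ‖z - xs‖ := by gcongr
      _ = _ := by rw [hpow]

section Normalized

variable {E : Type*} [NormedAddCommGroup E] [NormedSpace ℂ E] [CompleteSpace E]
  {G : E → E} {x : E} {c : ℝ}

theorem norm_fderiv_sub_fderiv_le_of_norm_iteratedFDeriv_le (hG : ContDiff ℂ ω G) (hc : 0 < c)
    (hcoef : ∀ k, 2 ≤ k → ‖iteratedFDeriv ℂ k G x‖ / k ! ≤ c ^ (k - 1)) {r : ℝ}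
    (hcr : c * r < 1) {z₁ z₂ : E} (hz₁ : z₁ ∈ closedBall x r) (hz₂ : z₂ ∈ closedBall x r) :
    ‖fderiv ℂ G z₁ - fderiv ℂ G z₂‖ ≤ 2 * c / (1 - c * r) ^ 3 * ‖z₁ - z₂‖ := by
  have hP : ∀ k, 2 ≤ k → ‖taylorSeriesAt G x k‖ ≤ c ^ (k - 1) := by
    simpa only [norm_taylorSeriesAt] using hcoef
  have hball := hasFPowerSeriesOnBall_taylorSeriesAt hG x
    ((taylorSeriesAt G x).ofReal_inv_le_radius_of_norm_le_pow hc hP) (by simpa using hc)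
  exact hball.norm_fderiv_sub_fderiv_le hP hcr hz₁ hz₂

variable (hG : ContDiff ℂ ω G) (hc : 0 < c)
  (hcoef : ∀ k, 2 ≤ k → ‖iteratedFDeriv ℂ k G x‖ / k ! ≤ c ^ (k - 1))
  (hG₁ : fderiv ℂ G x = 1)
include hG hc hcoef hG₁

theorem norm_fderiv_sub_one_le {r : ℝ} (hcr : c * r < 1) {z : E} (hz : z ∈ closedBall x r) :
    ‖fderiv ℂ G z - 1‖ ≤ 2 * c / (1 - c * r) ^ 3 * r := by
  have := norm_fderiv_sub_fderiv_le_of_norm_iteratedFDeriv_le hG hc hcoef hcr hz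
    (mem_closedBall_self (dist_nonneg.trans hz))
  rw [hG₁] at this
  exact this.trans (by gcongr; rwa [← dist_eq_norm])

/-- The simplified Newton map `v ↦ v - G v` contracts the ball of radius `1 / (25 c)` around `x`
by a factor `1 / 11`. -/
theorem exists_eq_zero_of_norm_le (hGx : ‖G x‖ ≤ 3 / (100 * c)) :
    ∃ xs, G xs = 0 ∧ ‖x - xs‖ ≤ 1 / (30 * c) := by
  have hcr : c * (1 / (25 * c)) = 1 / 25 := by field_simp
  have hK : ∀ z ∈ closedBall x (1 / (25 * c)), ‖fderiv ℂ G z - 1‖ ≤ 1 / 11 := fun z hz =>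
    calc ‖fderiv ℂ G z - 1‖ ≤ 2 * c / (1 - c * (1 / (25 * c))) ^ 3 * (1 / (25 * c)) :=
          norm_fderiv_sub_one_le hG hc hcoef hG₁ (by rw [hcr]; norm_num) hz
      _ = 2 / 25 / (1 - 1 / 25) ^ 3 := by rw [hcr]; field_simp
      _ ≤ 1 / 11 := by norm_num
  obtain ⟨xs, hxs, hdist⟩ := exists_eq_zero_of_norm_fderiv_sub_one_le
    (fun z _ => (hG.differentiable (by simp)).differentiableAt) hK (by norm_num)
    (hGx.trans (by field_simp; norm_num))
  refine ⟨xs, hxs, hdist.trans ?_⟩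
  calc ‖G x‖ / (1 - 1 / 11) ≤ 3 / (100 * c) / (1 - 1 / 11) := by gcongr
    _ ≤ 1 / (30 * c) := by field_simp; norm_num

theorem isUnit_fderiv_and_norm_newton_sub_le {xs : E} (hxs : G xs = 0)
    (hxxs : ‖x - xs‖ ≤ 1 / (30 * c)) {z : E} (hz : ‖z - xs‖ ≤ 1 / (12 * c)) :
    IsUnit (fderiv ℂ G z) ∧
      ‖z - Ring.inverse (fderiv ℂ G z) (G z) - xs‖ ≤ 60 * c / 13 * ‖z - xs‖ ^ 2 := by
  have hcr : c * (7 / (60 * c)) = 7 / 60 := by field_simp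
  have hLip : ∀ z₁ ∈ closedBall x (7 / (60 * c)), ∀ z₂ ∈ closedBall x (7 / (60 * c)),
      ‖fderiv ℂ G z₁ - fderiv ℂ G z₂‖ ≤ 3 * c * ‖z₁ - z₂‖ := fun z₁ hz₁ z₂ hz₂ =>
    (norm_fderiv_sub_fderiv_le_of_norm_iteratedFDeriv_le hG hc hcoef (by rw [hcr]; norm_num)
      hz₁ hz₂).trans (by rw [hcr]; gcongr; field_simp; norm_num)
  have hxs_mem : xs ∈ closedBall x (7 / (60 * c)) := by
    rw [mem_closedBall_iff_norm, norm_sub_rev]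
    exact hxxs.trans (by field_simp; norm_num)
  have hz_mem : z ∈ closedBall x (7 / (60 * c)) := by
    rw [mem_closedBall_iff_norm]
    calc ‖z - x‖ ≤ ‖z - xs‖ + ‖xs - x‖ := norm_sub_le_norm_sub_add_norm_sub z xs x
      _ ≤ 1 / (12 * c) + 1 / (30 * c) := add_le_add hz (by rwa [norm_sub_rev])
      _ = 7 / (60 * c) := by field_simp; norm_num
  have hdev : ‖fderiv ℂ G z - 1‖ ≤ 7 / 20 := by
    have := hLip z hz_mem x (mem_closedBall_self (by positivity))
    rw [hG₁] at this
    calc _ ≤ 3 * c * ‖z - x‖ := this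
      _ ≤ 3 * c * (7 / (60 * c)) := by gcongr; exact mem_closedBall_iff_norm.1 hz_mem
      _ = 7 / 20 := by field_simp; norm_num
  have hU := ContinuousLinearMap.isUnit_of_norm_sub_one_lt_one (hdev.trans_lt (by norm_num))
  have hinv : ‖Ring.inverse (fderiv ℂ G z)‖ ≤ 20 / 13 := by
    refine (ContinuousLinearMap.norm_inverse_le_of_norm_sub_one_lt_one
      (hdev.trans_lt (by norm_num))).trans ?_
    rw [inv_le_comm₀ (by linarith) (by norm_num)]
    linarith
  have htaylor := (convex_closedBall x _).norm_image_sub_sub_fderiv_le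
    (fun z _ => (hG.differentiable (by simp)).differentiableAt) hLip hz_mem hxs_mem
  refine ⟨hU, (norm_sub_inverse_apply_sub_le hU hxs).trans ?_⟩
  calc _ ≤ 20 / 13 * (3 * c * ‖xs - z‖ ^ 2) := by gcongr
    _ = 60 * c / 13 * ‖z - xs‖ ^ 2 := by rw [norm_sub_rev]; ring

end Normalized

section Smale

variable {n : ℕ} {F : EuclideanSpace ℂ (Fin n) → EuclideanSpace ℂ (Fin n)}
  {x : EuclideanSpace ℂ (Fin n)}

theorem norm_div_factorial_le_smaleGamma_pow (hγ : 0 < smaleGamma F x) {k : ℕ} (hk : 2 ≤ k) :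
    ‖(Ring.inverse (fderiv ℂ F x)).compContinuousMultilinearMap (iteratedFDeriv ℂ k F x)‖ /
      k ! ≤ smaleGamma F x ^ (k - 1) := by
  -- `smaleGamma` is a real `iSup`, which would be `0` if it were unbounded.
  have hbdd := not_not.1 (mt Real.iSup_of_not_bddAbove hγ.ne')
  have hroot := le_ciSup hbdd (⟨k, hk⟩ : {j : ℕ // 2 ≤ j})
  set a := ‖(Ring.inverse (fderiv ℂ F x)).compContinuousMultilinearMap
    (iteratedFDeriv ℂ k F x)‖ / (k ! : ℝ)
  have hk₁ : (0 : ℝ) < k - 1 := by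
    have : (2 : ℝ) ≤ k := by exact_mod_cast hk
    linarith
  calc a = (a ^ (1 / ((k : ℝ) - 1))) ^ ((k : ℝ) - 1) := by
        rw [← Real.rpow_mul (by positivity), one_div_mul_cancel hk₁.ne', Real.rpow_one]
    _ ≤ smaleGamma F x ^ ((k : ℝ) - 1) := by gcongr; exact hroot
    _ = smaleGamma F x ^ (k - 1) := by
        rw [← Real.rpow_natCast, Nat.cast_sub (by omega), Nat.cast_one]

theorem newtonOp_eq_of_isUnit_comp {z : EuclideanSpace ℂ (Fin n)} (hF : DifferentiableAt ℂ F z)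
    {A : EuclideanSpace ℂ (Fin n) →L[ℂ] EuclideanSpace ℂ (Fin n)} (hA : IsUnit A)
    (hAF : IsUnit (fderiv ℂ (A ∘ F) z)) :
    newtonOp F z = z - Ring.inverse (fderiv ℂ (A ∘ F) z) (A (F z)) := by
  have hderiv : fderiv ℂ (A ∘ F) z = A * fderiv ℂ F z :=
    (A.hasFDerivAt.comp z hF.hasFDerivAt).fderiv
  have hFz : fderiv ℂ F z = Ring.inverse A * fderiv ℂ (A ∘ F) z := by
    rw [hderiv, ← mul_assoc, Ring.inverse_mul_cancel _ hA, one_mul]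
  have hU : IsUnit (fderiv ℂ F z) := by rw [hFz]; exact hA.ringInverse.mul hAF
  rw [newtonOp, if_pos hU, hFz, Ring.inverse_mul (Or.inl hA.ringInverse), Ring.inverse_inverse hA]
  rfl

theorem exists_zero_and_norm_newtonOp_sub_le (hF : ContDiff ℂ ω F) (hinv : IsUnit (fderiv ℂ F x))
    (halpha : smaleAlpha F x < 0.03) (hγ : 0 < smaleGamma F x) :
    ∃ xs, F xs = 0 ∧ ‖x - xs‖ ≤ 1 / (30 * smaleGamma F x) ∧
      ∀ z, ‖z - xs‖ ≤ 1 / (12 * smaleGamma F x) →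
        ‖newtonOp F z - xs‖ ≤ 60 * smaleGamma F x / 13 * ‖z - xs‖ ^ 2 := by
  set γ := smaleGamma F x
  set L := Ring.inverse (fderiv ℂ F x)
  have hFd : Differentiable ℂ F := hF.differentiable (by simp)
  have hG : ContDiff ℂ ω (L ∘ F) := L.contDiff.comp hF
  have hG₁ : fderiv ℂ (L ∘ F) x = 1 := by
    rw [(L.hasFDerivAt.comp x (hFd x).hasFDerivAt).fderiv]
    exact Ring.inverse_mul_cancel _ hinv
  have hcoef : ∀ k, 2 ≤ k → ‖iteratedFDeriv ℂ k (L ∘ F) x‖ / k ! ≤ γ ^ (k - 1) := fun k hk => by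
    rw [L.iteratedFDeriv_comp_left hF.contDiffAt le_top]
    exact norm_div_factorial_le_smaleGamma_pow hγ hk
  have hGx : ‖(L ∘ F) x‖ ≤ 3 / (100 * γ) := by
    rw [le_div_iff₀ (by positivity)]
    have : ‖(L ∘ F) x‖ * γ < 0.03 := halpha
    linarith
  obtain ⟨xs, hxs, hxxs⟩ := exists_eq_zero_of_norm_le hG hγ hcoef hG₁ hGx
  refine ⟨xs, ?_, hxxs, fun z hz => ?_⟩
  · have := congrArg (fderiv ℂ F x) hxs
    rwa [Function.comp_apply, ← mul_apply_eq_comp,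
      Ring.mul_inverse_cancel _ hinv, one_apply_eq_self, map_zero] at this
  · obtain ⟨hU, hbound⟩ := isUnit_fderiv_and_norm_newton_sub_le hG hγ hcoef hG₁ hxs hxxs hz
    rwa [newtonOp_eq_of_isUnit_comp (hFd z) hinv.ringInverse hU]

end Smale

/-- If `α(F,x) < 0.03` and `‖x - y‖ < 1/(20 γ(F,x))`, then `x` and `y` are both
approximate solutions of `F` with the same associated solution `x⋆`, and
`‖x - x⋆‖ ≤ 1/(20 γ(F,x))`. -/
theorem smale_alpha_same_solution {n : ℕ}
    (F : EuclideanSpace ℂ (Fin n) → EuclideanSpace ℂ (Fin n))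
    (hF : ContDiff ℂ ⊤ F)
    (x y : EuclideanSpace ℂ (Fin n))
    (hinv : IsUnit (fderiv ℂ F x))
    (halpha : smaleAlpha F x < 0.03)
    (hdist : ‖x - y‖ < 1 / (20 * smaleGamma F x)) :
    ∃ xstar : EuclideanSpace ℂ (Fin n), F xstar = 0 ∧
      (∀ k : ℕ, 1 ≤ k →
        ‖(newtonOp F)^[k] x - xstar‖ ≤ (1/2 : ℝ) ^ (2 ^ k - 1) * ‖x - xstar‖) ∧
      (∀ k : ℕ, 1 ≤ k →
        ‖(newtonOp F)^[k] y - xstar‖ ≤ (1/2 : ℝ) ^ (2 ^ k - 1) * ‖y - xstar‖) ∧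
      ‖x - xstar‖ ≤ 1 / (20 * smaleGamma F x) := by
  have hγ : 0 < smaleGamma F x := by
    have : 0 < 1 / (20 * smaleGamma F x) := (norm_nonneg _).trans_lt hdist
    rw [one_div_pos] at this
    linarith
  obtain ⟨xs, hFxs, hxxs, hnewton⟩ := exists_zero_and_norm_newtonOp_sub_le hF hinv halpha hγ
  set γ := smaleGamma F x
  have hconv : ∀ z, ‖z - xs‖ ≤ 1 / (12 * γ) → ∀ k : ℕ,
      ‖(newtonOp F)^[k] z - xs‖ ≤ (1 / 2 : ℝ) ^ (2 ^ k - 1) * ‖z - xs‖ :=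
    fun z hz => norm_iterate_sub_le_of_norm_sub_le_sq (by positivity)
      (by field_simp; norm_num) hnewton hz
  have hy : ‖y - xs‖ ≤ 1 / (12 * γ) :=
    calc ‖y - xs‖ ≤ ‖x - y‖ + ‖x - xs‖ := by
          rw [norm_sub_rev x y]; exact norm_sub_le_norm_sub_add_norm_sub y x xs
      _ ≤ 1 / (20 * γ) + 1 / (30 * γ) := add_le_add hdist.le hxxs
      _ = 1 / (12 * γ) := by field_simp; norm_num
  exact ⟨xs, hFxs, fun k _ => hconv x (hxxs.trans (by gcongr; norm_num)) k,
    fun k _ => hconv y hy k, hxxs.trans (by gcongr; norm_num)⟩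
end

section
/- Suppose F has real coefficients, the interval box I contains a root of F, √2·‖I_n − Y□F'(I)‖ < 1, and the set of conjugates {ȳ : y ∈ K_{x,Y}(I)} is contained in I. Then the unique root x⋆ of F in I is real. -/
/-!
A root `x⋆ ∈ I` satisfies `x⋆ = x - Y F(x) + (I_n - Y M)(x⋆ - x)` for the slope matrix `M` given by
the mean value property, so `x⋆ ∈ K_{x,Y}(I)` and therefore `conj x⋆ ∈ I`; since `F` has real
coefficients, `conj x⋆` is a root too. Two roots `a, b ∈ I` differ by a kernel vector `d` of some
`M ∈ □F'(I)`, and then `d = (I_n - Y M) d` forces `d = 0` because `‖I_n - Y M‖ < 1`.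
-/

/-- The Krawczyk operator `K_{x,Y}(I) = x - Y F(x) + (I_n - Y □F'(I))(I - x)`, where
`𝓜 = □F'(I)` is an interval extension of `F'` on `I`. -/
def krawczyk {n : ℕ} (F : (Fin n → ℂ) → (Fin n → ℂ)) (I : Set (Fin n → ℂ))
    (𝓜 : Set ((Fin n → ℂ) →L[ℂ] (Fin n → ℂ))) (x : Fin n → ℂ)
    (Y : (Fin n → ℂ) →L[ℂ] (Fin n → ℂ)) : Set (Fin n → ℂ) :=
  {w | ∃ M ∈ 𝓜, ∃ z ∈ I, w = x - Y (F x) + ((z - x) - Y (M (z - x)))}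

/-- Entrywise complex conjugation on `ℂⁿ`. -/
noncomputable def conjVec {n : ℕ} (z : Fin n → ℂ) : Fin n → ℂ :=
  fun i => starRingEnd ℂ (z i)

theorem ContinuousLinearMap.eq_zero_of_apply_eq_zero_of_norm_id_sub_comp_lt_one
    {𝕜 E F : Type*} [NontriviallyNormedField 𝕜] [NormedAddCommGroup E] [NormedSpace 𝕜 E]
    [NormedAddCommGroup F] [NormedSpace 𝕜 F] {Y : F →L[𝕜] E} {M : E →L[𝕜] F}
    (hnorm : ‖ContinuousLinearMap.id 𝕜 E - Y.comp M‖ < 1) {d : E} (hd : M d = 0) : d = 0 := by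
  have hfix : (ContinuousLinearMap.id 𝕜 E - Y.comp M) d = d := by simp [hd]
  have hle : ‖d‖ ≤ ‖ContinuousLinearMap.id 𝕜 E - Y.comp M‖ * ‖d‖ := by
    conv_lhs => rw [← hfix]
    exact le_opNorm _ _
  by_contra hne
  have hpos : 0 < ‖d‖ := norm_pos_iff.mpr hne
  nlinarith

theorem conjVec_zero {n : ℕ} : conjVec (0 : Fin n → ℂ) = 0 := by
  funext i
  simp [conjVec]

section Krawczyk

variable {n : ℕ} {F : (Fin n → ℂ) → (Fin n → ℂ)} {I : Set (Fin n → ℂ)}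
  {𝓜 : Set ((Fin n → ℂ) →L[ℂ] (Fin n → ℂ))} {Y : (Fin n → ℂ) →L[ℂ] (Fin n → ℂ)}

theorem mem_krawczyk_of_root (hmean : ∀ a ∈ I, ∀ b ∈ I, ∃ M ∈ 𝓜, F b - F a = M (b - a))
    {x z : Fin n → ℂ} (hx : x ∈ I) (hz : z ∈ I) (hroot : F z = 0) :
    z ∈ krawczyk F I 𝓜 x Y := by
  obtain ⟨M, hM, hslope⟩ := hmean x hx z hz
  refine ⟨M, hM, z, hz, ?_⟩
  rw [← hslope, hroot, zero_sub, map_neg]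
  abel

theorem eq_of_root_of_root (hmean : ∀ a ∈ I, ∀ b ∈ I, ∃ M ∈ 𝓜, F b - F a = M (b - a))
    (hnorm : ∀ M ∈ 𝓜, ‖ContinuousLinearMap.id ℂ (Fin n → ℂ) - Y.comp M‖ < 1)
    {a b : Fin n → ℂ} (ha : a ∈ I) (hb : b ∈ I) (hFa : F a = 0) (hFb : F b = 0) : a = b := by
  obtain ⟨M, hM, hslope⟩ := hmean b hb a ha
  rw [hFa, hFb, sub_zero, eq_comm] at hslope
  exact sub_eq_zero.mp
    (ContinuousLinearMap.eq_zero_of_apply_eq_zero_of_norm_id_sub_comp_lt_one (hnorm M hM) hslope)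

end Krawczyk

theorem krawczyk_realness_general {n : ℕ} (F : (Fin n → ℂ) → (Fin n → ℂ)) (I : Set (Fin n → ℂ))
    (hreal : ∀ z, F (conjVec z) = conjVec (F z))
    (𝓜 : Set ((Fin n → ℂ) →L[ℂ] (Fin n → ℂ)))
    (hmean : ∀ a ∈ I, ∀ b ∈ I, ∃ M ∈ 𝓜, F b - F a = M (b - a))
    (x : Fin n → ℂ) (hx : x ∈ I)
    (Y : (Fin n → ℂ) →L[ℂ] (Fin n → ℂ))
    (hnorm : ∀ M ∈ 𝓜, Real.sqrt 2 * ‖ContinuousLinearMap.id ℂ (Fin n → ℂ) - Y.comp M‖ < 1)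
    (hconjK : ∀ w ∈ krawczyk F I 𝓜 x Y, conjVec w ∈ I)
    (xstar : Fin n → ℂ) (hxstar : xstar ∈ I) (hroot : F xstar = 0) :
    conjVec xstar = xstar := by
  have hcontract : ∀ M ∈ 𝓜, ‖ContinuousLinearMap.id ℂ (Fin n → ℂ) - Y.comp M‖ < 1 :=
    fun M hM => (le_mul_of_one_le_left (norm_nonneg _) Real.one_lt_sqrt_two.le).trans_lt
      (hnorm M hM)
  have hconj_mem : conjVec xstar ∈ I := hconjK xstar (mem_krawczyk_of_root hmean hx hxstar hroot)
  have hconj_root : F (conjVec xstar) = 0 := by rw [hreal, hroot, conjVec_zero]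
  exact eq_of_root_of_root hmean hcontract hconj_mem hxstar hconj_root hroot

/-- If `F` has real coefficients, `I` contains a root of `F`,
`√2 ‖I_n - Y □F'(I)‖ < 1`, and the set of conjugates of `K_{x,Y}(I)` is contained in `I`,
then the unique root `x⋆` of `F` in `I` is real. -/
theorem krawczyk_realness {n : ℕ} (F : (Fin n → ℂ) → (Fin n → ℂ)) (I : Set (Fin n → ℂ))
    (hreal : ∀ z, F (conjVec z) = conjVec (F z))
    (𝓜 : Set ((Fin n → ℂ) →L[ℂ] (Fin n → ℂ)))
    (hmean : ∀ a ∈ I, ∀ b ∈ I, ∃ M ∈ 𝓜, F b - F a = M (b - a))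
    (hext : ∀ y ∈ I, fderiv ℂ F y ∈ 𝓜)
    (x : Fin n → ℂ) (hx : x ∈ I)
    (Y : (Fin n → ℂ) →L[ℂ] (Fin n → ℂ)) (hY : IsUnit Y)
    (hnorm : ∀ M ∈ 𝓜, Real.sqrt 2 * ‖ContinuousLinearMap.id ℂ (Fin n → ℂ) - Y.comp M‖ < 1)
    (hconjK : ∀ w ∈ krawczyk F I 𝓜 x Y, conjVec w ∈ I)
    (xstar : Fin n → ℂ) (hxstar : xstar ∈ I) (hroot : F xstar = 0) :
    conjVec xstar = xstar :=
  krawczyk_realness_general F I hreal 𝓜 hmean x hx Y hnorm hconjK xstar hxstar hroot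
end
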